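/- arXiv:2002.10013 — 4 statements merged into one kernel-verified Lean document; each statement's English description precedes it below -/
import Mathlib

section
/- With X ⊆ Y, d_H(X,Y) < r, and θ as above: (a) for σ ∈ P_s(X), θ(σ) = σ, so the composite P_s(X) → P_s(Y) → P_{s+2r}(X) equals the inclusion P_s(X) → P_{s+2r}(X); (b) for every τ ∈ P_s(Y), the set τ ∪ θ(τ) belongs to P_{s+2r}(Y), and the inclusions τ ⊆ τ ∪ θ(τ) ⊇ θ(τ) are natural in τ (i.e., monotone in τ), giving a homotopy interleaving. -/
/-- Rips stability, second part (homotopy interleaving).  With `X ⊆ Y` finite in `Z`,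
`d_H(X,Y) < r`, and `θ` as before:
(a) for `σ ∈ P_s(X)` one has `θ(σ) = σ`, so `P_s(X) → P_s(Y) → P_{s+2r}(X)` is the
canonical inclusion; and
(b) for every `τ ∈ P_s(Y)` the set `τ ∪ θ(τ)` lies in `P_{s+2r}(Y)`, and the inclusions
`τ ⊆ τ ∪ θ(τ) ⊇ θ(τ)` are natural (monotone) in `τ`. -/
theorem stmt5 {Z : Type} [MetricSpace Z] [DecidableEq Z] (X Y : Finset Z) (hXY : X ⊆ Y)
    (r : ℝ) (hr : 0 < r) (hH : ∀ y ∈ Y, ∃ x ∈ X, dist y x < r)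
    (θ : Z → Z) (hθX : ∀ y ∈ X, θ y = y) (hθmem : ∀ y ∈ Y, θ y ∈ X)
    (hθd : ∀ y ∈ Y, dist y (θ y) < r) (s : ℝ) (hs : 0 ≤ s) :
    (∀ σ : Finset Z, σ ⊆ X → σ.Nonempty → (∀ a ∈ σ, ∀ b ∈ σ, dist a b ≤ s) →
      σ.image θ = σ) ∧
    (∀ τ : Finset Z, τ ⊆ Y → τ.Nonempty → (∀ a ∈ τ, ∀ b ∈ τ, dist a b ≤ s) →
      ((τ ∪ τ.image θ) ⊆ Y ∧ (τ ∪ τ.image θ).Nonempty ∧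
        (∀ a ∈ τ ∪ τ.image θ, ∀ b ∈ τ ∪ τ.image θ, dist a b ≤ s + 2 * r) ∧
        τ ⊆ τ ∪ τ.image θ ∧ τ.image θ ⊆ τ ∪ τ.image θ)) ∧
    (∀ τ τ' : Finset Z, τ ⊆ τ' → (τ ∪ τ.image θ) ⊆ (τ' ∪ τ'.image θ)) := by
  refine ⟨?_, ?_, ?_⟩
  · intro σ hσX _ _
    apply Finset.image_congr (g := id) ?_ |>.trans (Finset.image_id)
    intro a ha
    exact hθX a (hσX ha)
  · intro τ hτY hne hdiam
    have hkey : ∀ a ∈ τ ∪ τ.image θ, ∃ a0 ∈ τ, dist a a0 ≤ r := by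
      intro a ha
      rcases Finset.mem_union.1 ha with h | h
      · exact ⟨a, h, by simp [hr.le]⟩
      · rcases Finset.mem_image.1 h with ⟨a0, ha0, rfl⟩
        exact ⟨a0, ha0, by rw [dist_comm]; exact (hθd a0 (hτY ha0)).le⟩
    refine ⟨?_, ?_, ?_, Finset.subset_union_left, Finset.subset_union_right⟩
    · intro a ha
      rcases Finset.mem_union.1 ha with h | h
      · exact hτY h
      · rcases Finset.mem_image.1 h with ⟨a0, ha0, rfl⟩
        exact hXY (hθmem a0 (hτY ha0))
    · exact hne.mono Finset.subset_union_left
    · intro a ha b hb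
      obtain ⟨a0, ha0, hda⟩ := hkey a ha
      obtain ⟨b0, hb0, hdb⟩ := hkey b hb
      calc dist a b ≤ dist a a0 + dist a0 b0 + dist b0 b := dist_triangle4 _ _ _ _
        _ ≤ r + s + r := by
            have := hdiam a0 ha0 b0 hb0
            rw [dist_comm b0 b] at *
            linarith
        _ = s + 2 * r := by ring
  · intro τ τ' hsub
    exact Finset.union_subset_union hsub (Finset.image_subset_image hsub)
end

section
/- Let X ⊆ Y be finite subsets of a metric space Z, k ≥ 1 a natural number, and suppose Y has at least k+1 elements. If for every (k+1)-tuple of distinct points of Y there is a (k+1)-tuple of distinct points of X within product-metric distance < r (with sup metric on the product), then for every k-tuple of distinct points of Y there is a k-tuple of distinct points of X within product distance < r. (I.e., d_H(X^{k+1}_dis, Y^{k+1}_dis) < r implies d_H(X^k_dis, Y^k_dis) < r.) -/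
/-- If `X ⊆ Y` are finite subsets of a metric space `Z`, `k ≥ 1`, `Y` has at least `k+1`
elements, and every `(k+1)`-tuple of pairwise distinct points of `Y` is within sup-metric
distance `< r` of a `(k+1)`-tuple of pairwise distinct points of `X`, then every `k`-tuple
of pairwise distinct points of `Y` is within sup-metric distance `< r` of a `k`-tuple of
pairwise distinct points of `X`; i.e. `d_H(X^{k+1}_dis, Y^{k+1}_dis) < r` implies
`d_H(X^k_dis, Y^k_dis) < r`. -/
theorem stmt8 {Z : Type} [MetricSpace Z] (X Y : Set Z) (hXY : X ⊆ Y)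
    (hX : X.Finite) (hY : Y.Finite) (k : ℕ) (hk : 1 ≤ k) (hcard : k + 1 ≤ Y.ncard)
    (r : ℝ) (hr : 0 < r)
    (h : ∀ b : Fin (k + 1) → Z, (∀ i, b i ∈ Y) → Function.Injective b →
      ∃ a : Fin (k + 1) → Z, (∀ i, a i ∈ X) ∧ Function.Injective a ∧
        ∀ i, dist (b i) (a i) < r) :
    ∀ b : Fin k → Z, (∀ i, b i ∈ Y) → Function.Injective b →
      ∃ a : Fin k → Z, (∀ i, a i ∈ X) ∧ Function.Injective a ∧
        ∀ i, dist (b i) (a i) < r := by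
  intro b hbY hbinj
  -- find y ∈ Y not in range of b
  have hsub : ¬ (Y ⊆ Set.range b) := by
    intro hsubset
    have h1 : Y.ncard ≤ (Set.range b).ncard :=
      Set.ncard_le_ncard hsubset (Set.finite_range b)
    have h2 : (Set.range b).ncard ≤ k := by
      rw [← Set.image_univ]
      calc (b '' Set.univ).ncard ≤ (Set.univ : Set (Fin k)).ncard :=
            Set.ncard_image_le Set.finite_univ
        _ = k := by simp [Set.ncard_univ]
    omega
  obtain ⟨y, hyY, hyb⟩ := Set.not_subset.mp hsub
  set b' : Fin (k + 1) → Z := Fin.snoc b y with hb'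
  have hb'Y : ∀ i, b' i ∈ Y := by
    intro i
    refine Fin.lastCases ?_ ?_ i
    · simp [hb', Fin.snoc_last]; exact hyY
    · intro j; simp [hb', Fin.snoc_castSucc]; exact hbY j
  have hb'inj : Function.Injective b' := by
    intro i j hij
    rcases Fin.eq_castSucc_or_eq_last i with ⟨i', rfl⟩ | rfl <;>
      rcases Fin.eq_castSucc_or_eq_last j with ⟨j', rfl⟩ | rfl
    · simp only [hb', Fin.snoc_castSucc] at hij
      exact congrArg _ (hbinj hij)
    · simp only [hb', Fin.snoc_castSucc, Fin.snoc_last] at hij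
      exact absurd ⟨i', hij⟩ hyb
    · simp only [hb', Fin.snoc_castSucc, Fin.snoc_last] at hij
      exact absurd ⟨j', hij.symm⟩ hyb
    · rfl
  obtain ⟨a, haX, hainj, hadist⟩ := h b' hb'Y hb'inj
  refine ⟨fun i => a i.castSucc, fun i => haX _, ?_, ?_⟩
  · intro i j hij
    exact Fin.castSucc_injective _ (hainj hij)
  · intro i
    have := hadist i.castSucc
    simpa [hb', Fin.snoc_castSucc] using this
end

section
/- Let X ⊆ Y be finite subsets of a metric space Z with d_H(X^{k+1}_dis, Y^{k+1}_dis) < r. Then there is a function θ from the vertices of P_{s,k}(Y) to the vertices of P_{s+2r,k}(X) such that θ(x) = x for vertices x coming from X, d(y, θ(y)) < r for all vertices y, and for every simplex [y_0,…,y_p] ∈ P_{s,k}(Y), the set {θ(y_0),…,θ(y_p)} belongs to P_{s+2r,k}(X) and the set {y_0,…,y_p,θ(y_0),…,θ(y_p)} belongs to P_{s+2r,k}(Y). -/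
/-- Membership in the degree Rips (Lesnick) complex: `σ ∈ P_{s,k}(W)` iff `σ` is a
nonempty subset of `W` with pairwise distances `≤ s`, in which every point has at least
`k` distinct neighbours in `W` at distance `≤ s`. -/
def memLesnick {Z : Type} [MetricSpace Z] (s : ℝ) (k : ℕ) (W : Finset Z)
    (σ : Finset Z) : Prop :=
  σ.Nonempty ∧ ↑σ ⊆ (W : Set Z) ∧ (∀ x ∈ σ, ∀ y ∈ σ, dist x y ≤ s) ∧
    ∀ x ∈ σ, k ≤ {y : Z | y ∈ W ∧ y ≠ x ∧ dist x y ≤ s}.ncard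

open Classical in
/-- Key pointwise lemma: every vertex `y` of `P_{s,k}(Y)` admits a point `c ∈ X`
with `dist y c < r`, `c = y` if `y ∈ X`, and `c` has at least `k` distinct neighbours
in `X` at distance `≤ s + 2r`. -/
lemma stmt9_key {Z : Type} [MetricSpace Z] [DecidableEq Z] (X Y : Finset Z)
    (k : ℕ) (r : ℝ) (hr : 0 < r) (s : ℝ) (hs : 0 ≤ s)
    (h : ∀ b : Fin (k + 1) → Z, (∀ i, b i ∈ Y) → Function.Injective b →
      ∃ a : Fin (k + 1) → Z, (∀ i, a i ∈ X) ∧ Function.Injective a ∧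
        ∀ i, dist (b i) (a i) < r)
    (y : Z) (hy : y ∈ Y) (hyk : k ≤ {y' : Z | y' ∈ Y ∧ y' ≠ y ∧ dist y y' ≤ s}.ncard) :
    ∃ c, c ∈ X ∧ dist y c < r ∧ (y ∈ X → c = y) ∧
      k ≤ {x : Z | x ∈ X ∧ x ≠ c ∧ dist c x ≤ s + 2 * r}.ncard := by
  set N : Finset Z := Y.filter (fun y' => y' ≠ y ∧ dist y y' ≤ s) with hN
  have hNset : {y' : Z | y' ∈ Y ∧ y' ≠ y ∧ dist y y' ≤ s} = ↑N := by
    ext z; simp [hN, Finset.mem_filter]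
  have hNcard : k ≤ N.card := by
    rw [hNset, Set.ncard_coe_finset] at hyk; exact hyk
  obtain ⟨T, hTN, hT⟩ := Finset.exists_subset_card_eq hNcard
  have eT : {x // x ∈ T} ≃ Fin k :=
    Fintype.equivFinOfCardEq (by simpa using hT)
  set b : Fin (k + 1) → Z := Fin.cons y (fun j => ((eT.symm j : {x // x ∈ T}) : Z)) with hb
  have hTmem : ∀ j : Fin k, ((eT.symm j : {x // x ∈ T}) : Z) ∈ N :=
    fun j => hTN (eT.symm j).2
  have hbY : ∀ i, b i ∈ Y := by
    intro i
    refine Fin.cases ?_ ?_ i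
    · simpa [hb] using hy
    · intro j
      have := hTmem j
      rw [hN, Finset.mem_filter] at this
      simpa [hb] using this.1
  have hbd : ∀ i, dist y (b i) ≤ s := by
    intro i
    refine Fin.cases ?_ ?_ i
    · simp [hb, hs]
    · intro j
      have := hTmem j
      rw [hN, Finset.mem_filter] at this
      simpa [hb, dist_comm] using this.2.2
  have hbinj : Function.Injective b := by
    rw [hb, Fin.cons_injective_iff]
    constructor
    · rintro ⟨j, hj⟩
      have := hTmem j
      rw [hN, Finset.mem_filter] at this
      exact this.2.1 hj
    · intro j1 j2 hj
      exact eT.symm.injective (Subtype.val_injective hj)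
  obtain ⟨a, haX, hainj, had⟩ := h b hbY hbinj
  set c : Z := if y ∈ X then y else a 0 with hc
  have hcy : dist y c < r := by
    rw [hc]; split
    · simpa using hr
    · have := had 0
      simpa [hb] using this
  refine ⟨c, ?_, hcy, ?_, ?_⟩
  · rw [hc]; split
    · assumption
    · exact haX 0
  · intro hyX; simp [hc, hyX]
  · -- degree condition for c
    set A : Finset Z := (Finset.univ.image a).erase c with hA
    have hAk : k ≤ A.card := by
      have h1 : (Finset.univ.image a).card = k + 1 := by
        rw [Finset.card_image_of_injective _ hainj, Finset.card_univ, Fintype.card_fin]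
      have h2 := Finset.pred_card_le_card_erase (s := Finset.univ.image a) (a := c)
      rw [h1] at h2
      simpa [hA] using h2
    have hsub : (↑A : Set Z) ⊆ {x : Z | x ∈ X ∧ x ≠ c ∧ dist c x ≤ s + 2 * r} := by
      intro z hz
      simp only [hA, Finset.coe_erase, Set.mem_diff, Finset.coe_image,
        Set.mem_image, Finset.coe_univ, Set.image_univ, Set.mem_range,
        Set.mem_singleton_iff] at hz
      obtain ⟨⟨i, rfl⟩, hne⟩ := hz
      refine ⟨haX i, hne, ?_⟩
      calc dist c (a i) ≤ dist c y + dist y (b i) + dist (b i) (a i) :=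
            dist_triangle4 c y (b i) (a i)
        _ ≤ r + s + r := by
            have h1 : dist c y ≤ r := by rw [dist_comm]; exact hcy.le
            have h2 := hbd i
            have h3 := (had i).le
            linarith
        _ = s + 2 * r := by ring
    have hfin : {x : Z | x ∈ X ∧ x ≠ c ∧ dist c x ≤ s + 2 * r}.Finite :=
      X.finite_toSet.subset (fun z hz => hz.1)
    calc (k : ℕ) ≤ A.card := hAk
      _ = (↑A : Set Z).ncard := (Set.ncard_coe_finset A).symm
      _ ≤ _ := Set.ncard_le_ncard hsub hfin

/-- Degree Rips stability (Theorem 6 of the paper).  Let `X ⊆ Y` be finite subsets of a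
metric space `Z` with `d_H(X^{k+1}_dis, Y^{k+1}_dis) < r` (sup metric on tuples).  Then
there is a function `θ` sending vertices of `P_{s,k}(Y)` to vertices of `P_{s+2r,k}(X)`
with `θ(x) = x` for vertices coming from `X` and `d(y,θ(y)) < r`, such that for every
simplex `σ ∈ P_{s,k}(Y)`, `θ(σ) ∈ P_{s+2r,k}(X)` and `σ ∪ θ(σ) ∈ P_{s+2r,k}(Y)`. -/
theorem stmt9 {Z : Type} [MetricSpace Z] [DecidableEq Z] (X Y : Finset Z) (hXY : X ⊆ Y)
    (k : ℕ) (r : ℝ) (hr : 0 < r) (s : ℝ) (hs : 0 ≤ s)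
    (h : ∀ b : Fin (k + 1) → Z, (∀ i, b i ∈ Y) → Function.Injective b →
      ∃ a : Fin (k + 1) → Z, (∀ i, a i ∈ X) ∧ Function.Injective a ∧
        ∀ i, dist (b i) (a i) < r) :
    ∃ θ : Z → Z,
      (∀ x ∈ X, memLesnick s k Y {x} → θ x = x) ∧
      (∀ y ∈ Y, memLesnick s k Y {y} → dist y (θ y) < r) ∧
      (∀ y ∈ Y, memLesnick s k Y {y} → memLesnick (s + 2 * r) k X {θ y}) ∧
      (∀ σ : Finset Z, memLesnick s k Y σ →
        memLesnick (s + 2 * r) k X (σ.image θ) ∧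
        memLesnick (s + 2 * r) k Y (σ ∪ σ.image θ)) := by
  classical
  -- vertex hypothesis unfolds to membership + degree
  have hvtx : ∀ y : Z, memLesnick s k Y {y} →
      y ∈ Y ∧ k ≤ {y' : Z | y' ∈ Y ∧ y' ≠ y ∧ dist y y' ≤ s}.ncard := by
    intro y hy
    obtain ⟨-, hsub, -, hdeg⟩ := hy
    exact ⟨hsub (by simp), hdeg y (by simp)⟩
  have key : ∀ y : Z, ∃ c : Z, memLesnick s k Y {y} →
      c ∈ X ∧ dist y c < r ∧ (y ∈ X → c = y) ∧
      k ≤ {x : Z | x ∈ X ∧ x ≠ c ∧ dist c x ≤ s + 2 * r}.ncard := by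
    intro y
    by_cases hy : memLesnick s k Y {y}
    · obtain ⟨hyY, hyk⟩ := hvtx y hy
      obtain ⟨c, hc⟩ := stmt9_key X Y k r hr s hs h y hyY hyk
      exact ⟨c, fun _ => hc⟩
    · exact ⟨y, fun hy' => absurd hy' hy⟩
  choose θ hθ using key
  have hfix : ∀ x ∈ X, memLesnick s k Y {x} → θ x = x :=
    fun x hx hvx => (hθ x hvx).2.2.1 hx
  have hdist : ∀ y : Z, memLesnick s k Y {y} → dist y (θ y) < r :=
    fun y hvy => (hθ y hvy).2.1
  have hmemX : ∀ y : Z, memLesnick s k Y {y} → θ y ∈ X :=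
    fun y hvy => (hθ y hvy).1
  have hdeg : ∀ y : Z, memLesnick s k Y {y} →
      k ≤ {x : Z | x ∈ X ∧ x ≠ θ y ∧ dist (θ y) x ≤ s + 2 * r}.ncard :=
    fun y hvy => (hθ y hvy).2.2.2
  have hvtxX : ∀ y : Z, memLesnick s k Y {y} → memLesnick (s + 2 * r) k X {θ y} := by
    intro y hvy
    refine ⟨⟨θ y, by simp⟩, ?_, ?_, ?_⟩
    · intro z hz
      simp only [Finset.coe_singleton, Set.mem_singleton_iff] at hz
      subst hz; exact hmemX y hvy
    · intro x hx y' hy'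
      simp only [Finset.mem_singleton] at hx hy'
      subst hx; subst hy'
      simp; positivity
    · intro x hx
      simp only [Finset.mem_singleton] at hx
      subst hx; exact hdeg y hvy
  refine ⟨θ, hfix, fun y _ => hdist y, fun y _ => hvtxX y, ?_⟩
  intro σ hσ
  obtain ⟨hne, hsubY, hpair, hdegσ⟩ := hσ
  -- every point of `σ` is a vertex
  have hv : ∀ y ∈ σ, memLesnick s k Y {y} := by
    intro y hyσ
    refine ⟨⟨y, by simp⟩, ?_, ?_, ?_⟩
    · intro z hz
      simp only [Finset.coe_singleton, Set.mem_singleton_iff] at hz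
      subst hz; exact hsubY hyσ
    · intro a ha b hb
      simp only [Finset.mem_singleton] at ha hb
      subst ha; subst hb; simp [hs]
    · intro x hx
      simp only [Finset.mem_singleton] at hx
      subst hx; exact hdegσ _ hyσ
  have hsr : s ≤ s + 2 * r := by linarith
  -- every point of the union is near a point of σ
  have hnear : ∀ z ∈ σ ∪ σ.image θ, ∃ w ∈ σ, dist w z ≤ r := by
    intro z hz
    rcases Finset.mem_union.1 hz with hz | hz
    · exact ⟨z, hz, by simp [hr.le]⟩
    · obtain ⟨w, hw, rfl⟩ := Finset.mem_image.1 hz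
      exact ⟨w, hw, (hdist w (hv w hw)).le⟩
  constructor
  · -- image in X
    refine ⟨hne.image θ, ?_, ?_, ?_⟩
    · intro z hz
      simp only [Finset.coe_image, Set.mem_image, Finset.mem_coe] at hz
      obtain ⟨w, hw, rfl⟩ := hz
      exact hmemX w (hv w hw)
    · intro x hx y hy
      obtain ⟨w, hw, rfl⟩ := Finset.mem_image.1 hx
      obtain ⟨w', hw', rfl⟩ := Finset.mem_image.1 hy
      have h1 : dist (θ w) w ≤ r := by
        rw [dist_comm]; exact (hdist w (hv w hw)).le
      have h2 : dist w' (θ w') ≤ r := (hdist w' (hv w' hw')).le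
      have h3 := hpair w hw w' hw'
      calc dist (θ w) (θ w') ≤ dist (θ w) w + dist w w' + dist w' (θ w') :=
            dist_triangle4 _ _ _ _
        _ ≤ s + 2 * r := by linarith
    · intro x hx
      obtain ⟨w, hw, rfl⟩ := Finset.mem_image.1 hx
      exact hdeg w (hv w hw)
  · -- union in Y
    refine ⟨hne.mono Finset.subset_union_left, ?_, ?_, ?_⟩
    · intro z hz
      simp only [Finset.coe_union, Set.mem_union, Finset.mem_coe] at hz
      rcases hz with hz | hz
      · exact hsubY hz
      · obtain ⟨w, hw, rfl⟩ := Finset.mem_image.1 hz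
        exact hXY (hmemX w (hv w hw))
    · intro x hx y hy
      obtain ⟨w, hw, hwx⟩ := hnear x hx
      obtain ⟨w', hw', hw'y⟩ := hnear y hy
      have h3 := hpair w hw w' hw'
      have : dist x y ≤ dist x w + dist w w' + dist w' y := dist_triangle4 _ _ _ _
      rw [dist_comm x w] at this
      linarith
    · intro x hx
      rcases Finset.mem_union.1 hx with hz | hz
      · -- scale monotonicity
        refine le_trans (hdegσ x hz) (Set.ncard_le_ncard ?_ ?_)
        · intro z hz'
          exact ⟨hz'.1, hz'.2.1, hz'.2.2.trans hsr⟩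
        · exact Y.finite_toSet.subset (fun z hz' => hz'.1)
      · obtain ⟨w, hw, rfl⟩ := Finset.mem_image.1 hz
        refine le_trans (hdeg w (hv w hw)) (Set.ncard_le_ncard ?_ ?_)
        · intro z hz'
          exact ⟨hXY hz'.1, hz'.2⟩
        · exact Y.finite_toSet.subset (fun z hz' => hz'.1)
end

section
/- Two-out-of-three up to addition of constants for systems of sets: given maps of systems f : X → Y and g : Y → Z with h = g∘f, if h is an r-isomorphism and g is an s-isomorphism, then f is an (r+s)-isomorphism. -/
open scoped NNReal

/-- A system of sets: a functor `[0,∞) → Set`, given by sets `X_s` and compatible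
structure maps `σ : X_s → X_t` for `s ≤ t`. -/
structure SysSet where
  obj : ℝ≥0 → Type
  map : ∀ {s t : ℝ≥0}, s ≤ t → obj s → obj t
  map_id : ∀ (s : ℝ≥0) (x : obj s), map le_rfl x = x
  map_comp : ∀ {s t u : ℝ≥0} (h₁ : s ≤ t) (h₂ : t ≤ u) (x : obj s),
    map h₂ (map h₁ x) = map (h₁.trans h₂) x

/-- A map of systems of sets: a natural transformation of functors. -/
structure SysSet.Hom (X Y : SysSet) where
  app : ∀ s, X.obj s → Y.obj s
  naturality : ∀ {s t : ℝ≥0} (h : s ≤ t) (x : X.obj s),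
    app t (X.map h x) = Y.map h (app s x)

/-- Composition of maps of systems (`(f.comp g) = g ∘ f`). -/
def SysSet.Hom.comp {X Y Z : SysSet} (f : X.Hom Y) (g : Y.Hom Z) : X.Hom Z where
  app s x := g.app s (f.app s x)
  naturality h x := by (try simp only); rw [f.naturality, g.naturality]

/-- `f` is an `r`-monomorphism: if `f(x) = f(y)` in `Y_s` then `σ(x) = σ(y)` in `X_{s+r}`. -/
def SysSet.Hom.IsMono {X Y : SysSet} (r : ℝ≥0) (f : X.Hom Y) : Prop :=
  ∀ (s : ℝ≥0) (x y : X.obj s), f.app s x = f.app s y →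
    X.map (le_self_add : s ≤ s + r) x = X.map le_self_add y

/-- `f` is an `r`-epimorphism: every `y ∈ Y_s` satisfies `σ(y) = f(x)` in `Y_{s+r}` for
some `x ∈ X_{s+r}`. -/
def SysSet.Hom.IsEpi {X Y : SysSet} (r : ℝ≥0) (f : X.Hom Y) : Prop :=
  ∀ (s : ℝ≥0) (y : Y.obj s), ∃ x : X.obj (s + r),
    f.app (s + r) x = Y.map (le_self_add : s ≤ s + r) y

/-- `f` is an `r`-isomorphism if it is both an `r`-monomorphism and an `r`-epimorphism. -/
def SysSet.Hom.IsIso {X Y : SysSet} (r : ℝ≥0) (f : X.Hom Y) : Prop :=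
  f.IsMono r ∧ f.IsEpi r

namespace SysSet.Hom

variable {X Y Z : SysSet}

theorem IsMono.mono {f : X.Hom Y} {r r' : ℝ≥0} (hf : f.IsMono r) (hr : r ≤ r') :
    f.IsMono r' := by
  intro s x y hxy
  have hmap := congrArg (X.map (by gcongr : s + r ≤ s + r')) (hf s x y hxy)
  rwa [X.map_comp, X.map_comp] at hmap

theorem IsMono.of_comp {f : X.Hom Y} {g : Y.Hom Z} {r : ℝ≥0} (h : (f.comp g).IsMono r) :
    f.IsMono r :=
  fun s x y hxy => h s x y (congrArg (g.app s) hxy)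

/-- Lets a witness live at any time between `s` and `s + r`; e.g. `t + r + s`, whose type
`X.obj (t + r + s)` is not definitionally `X.obj (t + (r + s))`. -/
theorem IsEpi.of_exists_le {f : X.Hom Y} {r : ℝ≥0}
    (H : ∀ s (y : Y.obj s), ∃ t, ∃ (hst : s ≤ t) (_ : t ≤ s + r), ∃ x : X.obj t,
      f.app t x = Y.map hst y) :
    f.IsEpi r := by
  intro s y
  obtain ⟨t, hst, hts, x, hx⟩ := H s y
  exact ⟨X.map hts x, by rw [f.naturality, hx, Y.map_comp]⟩

/-- Lift `g y` through `f.comp g`; the lift `x` then has `g (f x) = g (σ y)`, which the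
`s`-monomorphism `g` turns into `f (σ x) = σ y` one step `s` later. -/
theorem IsEpi.of_comp_of_isMono {f : X.Hom Y} {g : Y.Hom Z} {r s : ℝ≥0}
    (h : (f.comp g).IsEpi r) (hg : g.IsMono s) : f.IsEpi (r + s) := by
  refine IsEpi.of_exists_le fun t y => ?_
  obtain ⟨x, hx⟩ := h t (g.app t y)
  have hgx : g.app (t + r) (f.app (t + r) x) = g.app (t + r) (Y.map le_self_add y) :=
    hx.trans (g.naturality _ y).symm
  refine ⟨t + r + s, le_self_add.trans le_self_add, (add_assoc t r s).le,
    X.map le_self_add x, ?_⟩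
  rw [f.naturality, hg _ _ _ hgx, Y.map_comp]

end SysSet.Hom

/-- Two-out-of-three up to addition of constants: if `h = g ∘ f` is an `r`-isomorphism
and `g` is an `s`-isomorphism, then `f` is an `(r+s)`-isomorphism. -/
theorem stmt13 {X Y Z : SysSet} (f : X.Hom Y) (g : Y.Hom Z) (h : X.Hom Z)
    (hh : h = f.comp g) (r s : ℝ≥0)
    (hr : h.IsIso r) (hs : g.IsIso s) : f.IsIso (r + s) := by
  subst hh
  exact ⟨hr.1.of_comp.mono le_self_add, hr.2.of_comp_of_isMono hs.1⟩
end
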